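/- Let T > 0, a > 0, let σ : [0,T] → ℝ be right-continuous with left limits, with at most finitely many discontinuity points and σ̲ ≤ σ(u) ≤ σ̄ for constants 0 < σ̲ ≤ σ̄, let α : [0,T] → ℝ be continuous positive, and let the price jump times 0 < τ_1 < … < τ_N ≤ T (N ≥ 1) have sizes j_1, …, j_N ∈ ℝ∖{0}. For each integer B ≥ 1, with Δ_B = T/B and 𝖳_i = i·T/B, set σ̄_i² = Δ_B^{−1}·( ∫_{𝖳_{i−1}}^{𝖳_i} σ(u)² du + Σ_{τ_p ∈ (𝖳_{i−1},𝖳_i]} j_p² ), 𝒬_i = ∫_{𝖳_{i−1}}^{𝖳_i} σ(u)⁴ du + Σ_{τ_p ∈ (𝖳_{i−1},𝖳_i]} j_p²·(σ(τ_p)² + σ(τ_p⁻)²), R_i = (∫₀^T α^{−1})/(∫_{𝖳_{i−1}}^{𝖳_i} α^{−1}), and AVAR_B^{(QMLE,rob)} = Σ_{i=1}^B R_i^{1/2}·[ 5·a·Δ_B^{1/2}·𝒬_i/σ̄_i + 3·a·σ̄_i³·Δ_B^{3/2} ]. Then B^{−1/2}·AVAR_B^{(QMLE,rob)} → 3·a·T^{−1/2}·(∫₀^T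 α(s)^{−1} ds)^{1/2} · Σ_{p=1}^N α(τ_p)^{1/2}·|j_p|³ as B → ∞; in particular AVAR_B^{(QMLE,rob)} → +∞. -/

import Mathlib

open MeasureTheory Filter
open scoped Classical

lemma sq_rpow_half {x : ℝ} (hx : 0 ≤ x) : (x^2) ^ ((1:ℝ)/2) = x := by
  rw [← Real.rpow_natCast x 2, ← Real.rpow_mul hx]
  norm_num

lemma sq_rpow_threehalf {x : ℝ} (hx : 0 ≤ x) : (x^2) ^ ((3:ℝ)/2) = x^3 := by
  rw [← Real.rpow_natCast x 2, ← Real.rpow_mul hx]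
  norm_num

noncomputable def blockIdx (T t : ℝ) (B : ℕ) : ℕ := ⌈t * B / T⌉₊ - 1

lemma blockIdx_spec {T t : ℝ} {B : ℕ} (hT : 0 < T) (ht : 0 < t) (htT : t ≤ T) (hB : 1 ≤ B) :
    ((blockIdx T t B : ℝ) * T / B < t ∧ t ≤ ((blockIdx T t B : ℝ) + 1) * T / B) ∧
      blockIdx T t B < B := by
  have hb : (0:ℝ) < B := by exact_mod_cast hB
  set x := t * B / T with hx
  have hx0 : 0 < x := by positivity
  have hn1 : 1 ≤ ⌈x⌉₊ := Nat.one_le_ceil_iff.2 hx0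
  have hceil : (⌈x⌉₊ : ℝ) - 1 < x := by
    have := Nat.ceil_lt_add_one hx0.le
    linarith
  have hle : x ≤ (⌈x⌉₊ : ℝ) := Nat.le_ceil x
  have hcast : ((blockIdx T t B : ℕ) : ℝ) = (⌈x⌉₊ : ℝ) - 1 := by
    unfold blockIdx
    rw [← hx, Nat.cast_sub hn1]
    simp
  have hnB : ⌈x⌉₊ ≤ B := by
    apply Nat.ceil_le.2
    rw [hx, div_le_iff₀ hT]
    nlinarith
  refine ⟨⟨?_, ?_⟩, ?_⟩
  · rw [hcast, div_lt_iff₀ hb]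
    calc ((⌈x⌉₊:ℝ) - 1) * T < x * T := by nlinarith
    _ = t * B := by rw [hx]; field_simp
  · rw [hcast]
    have h4 : ((⌈x⌉₊:ℝ) - 1 + 1) = (⌈x⌉₊:ℝ) := by ring
    rw [h4, le_div_iff₀ hb]
    calc t * B = x * T := by rw [hx]; field_simp
    _ ≤ (⌈x⌉₊:ℝ) * T := by nlinarith
  · unfold blockIdx
    rw [← hx]
    omega

lemma block_unique {T t : ℝ} {B : ℕ} (hT : 0 < T) (hB : 1 ≤ B) {i k : ℕ}
    (hi : (i:ℝ)*T/B < t ∧ t ≤ ((i:ℝ)+1)*T/B)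
    (hk : (k:ℝ)*T/B < t ∧ t ≤ ((k:ℝ)+1)*T/B) : i = k := by
  have hb : (0:ℝ) < B := by exact_mod_cast hB
  have key : ∀ i k : ℕ, i < k →
      ((i:ℝ)*T/B < t ∧ t ≤ ((i:ℝ)+1)*T/B) →
      ((k:ℝ)*T/B < t ∧ t ≤ ((k:ℝ)+1)*T/B) → False := by
    intro i k hik h1 h2
    have h3 : ((i:ℝ)+1) ≤ (k:ℝ) := by exact_mod_cast hik
    have h5 : ((i:ℝ)+1)*T/B ≤ (k:ℝ)*T/B :=
      div_le_div_of_nonneg_right (by nlinarith) hb.le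
    linarith [h1.2, h2.1]
  rcases lt_trichotomy i k with h | h | h
  · exact absurd (key i k h hi hk) (by simp)
  · exact h
  · exact absurd (key k i h hk hi) (by simp)

lemma same_block_close {x y s t : ℝ} (hs : x < s ∧ s ≤ y) (ht : x < t ∧ t ≤ y) :
    |s - t| < y - x := by
  rw [abs_sub_lt_iff]; constructor <;> linarith [hs.1, hs.2, ht.1, ht.2]

/-- Jump-modified quarticity on block `i` (for `B` blocks):
`𝒬_i = ∫_block σ⁴ + Σ_{τ_p ∈ block} j_p²(σ(τ_p)² + σ(τ_p⁻)²)`,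
where `σm` is the left-limit function of `σ`. -/
noncomputable def Qjump (T : ℝ) (σ σm : ℝ → ℝ) {N : ℕ} (τ j : Fin N → ℝ)
    (B i : ℕ) : ℝ :=
  (∫ u in ((i : ℝ) * T / B)..(((i : ℝ) + 1) * T / B), σ u ^ 4) +
    ∑ p : Fin N,
      if (i : ℝ) * T / B < τ p ∧ τ p ≤ ((i : ℝ) + 1) * T / B then
        j p ^ 2 * (σ (τ p) ^ 2 + σm (τ p) ^ 2) else 0

/-- Quadratic variation on block `i`:
`Δ_B σ̄_i² = ∫_block σ² + Σ_{τ_p ∈ block} j_p²`. -/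
noncomputable def QVjump (T : ℝ) (σ : ℝ → ℝ) {N : ℕ} (τ j : Fin N → ℝ)
    (B i : ℕ) : ℝ :=
  (∫ u in ((i : ℝ) * T / B)..(((i : ℝ) + 1) * T / B), σ u ^ 2) +
    ∑ p : Fin N,
      if (i : ℝ) * T / B < τ p ∧ τ p ≤ ((i : ℝ) + 1) * T / B then j p ^ 2 else 0

/-- `σ̄_i = (Δ_B⁻¹ · quadratic variation of block i)^{1/2}`. -/
noncomputable def sigBarJump (T : ℝ) (σ : ℝ → ℝ) {N : ℕ} (τ j : Fin N → ℝ)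
    (B i : ℕ) : ℝ :=
  ((T / B)⁻¹ * QVjump T σ τ j B i) ^ ((1 : ℝ) / 2)

/-- Local robust QMLE asymptotic variance with `B` blocks. -/
noncomputable def avarQMLErob (T a : ℝ) (σ σm α : ℝ → ℝ) {N : ℕ}
    (τ j : Fin N → ℝ) (B : ℕ) : ℝ :=
  ∑ i ∈ Finset.range B,
    ((∫ s in (0:ℝ)..T, (α s)⁻¹) /
        (∫ s in ((i : ℝ) * T / B)..(((i : ℝ) + 1) * T / B), (α s)⁻¹)) ^ ((1 : ℝ) / 2) *
      (5 * a * (T / B) ^ ((1 : ℝ) / 2) * Qjump T σ σm τ j B i /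
          sigBarJump T σ τ j B i
        + 3 * a * sigBarJump T σ τ j B i ^ 3 * (T / B) ^ ((3 : ℝ) / 2))

/-- The `i`-th summand of `avarQMLErob`. -/
noncomputable def termB (T a : ℝ) (σ σm α : ℝ → ℝ) {N : ℕ} (τ j : Fin N → ℝ)
    (B i : ℕ) : ℝ :=
  ((∫ s in (0:ℝ)..T, (α s)⁻¹) /
      (∫ s in ((i : ℝ) * T / B)..(((i : ℝ) + 1) * T / B), (α s)⁻¹)) ^ ((1 : ℝ) / 2) *
    (5 * a * (T / B) ^ ((1 : ℝ) / 2) * Qjump T σ σm τ j B i /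
        sigBarJump T σ τ j B i
      + 3 * a * sigBarJump T σ τ j B i ^ 3 * (T / B) ^ ((3 : ℝ) / 2))

lemma avar_eq (T a : ℝ) (σ σm α : ℝ → ℝ) {N : ℕ} (τ j : Fin N → ℝ) (B : ℕ) :
    avarQMLErob T a σ σm α τ j B = ∑ i ∈ Finset.range B, termB T a σ σm α τ j B i := rfl

set_option maxHeartbeats 1000000 in
/-- When the price process has `N ≥ 1` jumps, the local QMLE asymptotic
variance satisfies `B^{-1/2}·AVAR_B → 3aT^{-1/2}(∫₀^T α⁻¹)^{1/2} Σ_p α(τ_p)^{1/2}|j_p|³`,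
and in particular `AVAR_B → +∞`. -/
theorem stmt16 (T a σlo σhi : ℝ) (hT : 0 < T) (ha : 0 < a)
    (hσlo : 0 < σlo) (hσ : σlo ≤ σhi) (σ σm α : ℝ → ℝ)
    (hrc : ∀ u ∈ Set.Ico (0 : ℝ) T, ContinuousWithinAt σ (Set.Ici u) u)
    (hleft : ∀ u ∈ Set.Ioc (0 : ℝ) T,
      Tendsto σ (nhdsWithin u (Set.Iio u)) (nhds (σm u)))
    (hfin : {u ∈ Set.Icc (0 : ℝ) T |
      ¬ ContinuousWithinAt σ (Set.Icc (0 : ℝ) T) u}.Finite)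
    (hbd : ∀ u ∈ Set.Icc (0 : ℝ) T, σlo ≤ σ u ∧ σ u ≤ σhi)
    (hα : ContinuousOn α (Set.Icc 0 T))
    (hαpos : ∀ u ∈ Set.Icc (0 : ℝ) T, 0 < α u)
    (N : ℕ) (hN : 1 ≤ N) (τ j : Fin N → ℝ) (hτmono : StrictMono τ)
    (hτ : ∀ p, 0 < τ p ∧ τ p ≤ T) (hj : ∀ p, j p ≠ 0) :
    Tendsto (fun B : ℕ => (B : ℝ) ^ (-(1 : ℝ) / 2) * avarQMLErob T a σ σm α τ j B)
        atTop
        (nhds (3 * a * T ^ (-(1 : ℝ) / 2) *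
          (∫ s in (0:ℝ)..T, (α s)⁻¹) ^ ((1 : ℝ) / 2) *
          ∑ p : Fin N, (α (τ p)) ^ ((1 : ℝ) / 2) * |j p| ^ 3)) ∧
      Tendsto (fun B : ℕ => avarQMLErob T a σ σm α τ j B) atTop atTop := by
  -- ===================== setup =====================
  obtain ⟨Ahi, hAhi⟩ := isCompact_Icc.exists_bound_of_continuousOn hα
  have hAhi' : ∀ u ∈ Set.Icc (0:ℝ) T, α u ≤ Ahi := fun u hu =>
    (le_abs_self _).trans (hAhi u hu)
  have hAhipos : 0 < Ahi :=
    lt_of_lt_of_le (hαpos 0 (Set.left_mem_Icc.2 hT.le)) (hAhi' 0 (Set.left_mem_Icc.2 hT.le))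
  have hαinv : ContinuousOn (fun u => (α u)⁻¹) (Set.Icc 0 T) :=
    hα.inv₀ (fun u hu => (hαpos u hu).ne')
  have hαii : ∀ {x y : ℝ}, x ∈ Set.Icc (0:ℝ) T → y ∈ Set.Icc (0:ℝ) T →
      IntervalIntegrable (fun u => (α u)⁻¹) volume x y := by
    intro x y hx hy
    exact (hαinv.mono (Set.uIcc_subset_Icc hx hy)).intervalIntegrable
  have hαinvlb : ∀ u ∈ Set.Icc (0:ℝ) T, Ahi⁻¹ ≤ (α u)⁻¹ := by
    intro u hu
    exact inv_anti₀ (hαpos u hu) (hAhi' u hu)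
  have hdenlb : ∀ {x y : ℝ}, x ∈ Set.Icc (0:ℝ) T → y ∈ Set.Icc (0:ℝ) T → x ≤ y →
      (y - x) * Ahi⁻¹ ≤ ∫ s in x..y, (α s)⁻¹ := by
    intro x y hx hy hxy
    have := intervalIntegral.integral_mono_on (μ := volume) hxy
      (intervalIntegrable_const (c := Ahi⁻¹)) (hαii hx hy)
      (fun u hu => hαinvlb u ⟨le_trans hx.1 hu.1, le_trans hu.2 hy.2⟩)
    rwa [intervalIntegral.integral_const, smul_eq_mul] at this
  have hI0 : 0 < ∫ s in (0:ℝ)..T, (α s)⁻¹ := by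
    have := hdenlb (Set.left_mem_Icc.2 hT.le) (Set.right_mem_Icc.2 hT.le) hT.le
    have h2 : 0 < (T - 0) * Ahi⁻¹ := by
      have : (0:ℝ) < Ahi⁻¹ := inv_pos.2 hAhipos
      nlinarith
    linarith
  have hσae : AEMeasurable σ (volume.restrict (Set.Icc (0:ℝ) T)) := by
    set S := {u ∈ Set.Icc (0 : ℝ) T | ¬ ContinuousWithinAt σ (Set.Icc (0 : ℝ) T) u} with hS
    have hσcont : ContinuousOn σ (Set.Icc (0:ℝ) T \ S) := by
      intro u hu
      have hc : ContinuousWithinAt σ (Set.Icc (0:ℝ) T) u := by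
        by_contra hcon
        exact hu.2 ⟨hu.1, hcon⟩
      exact hc.mono Set.diff_subset
    have hmeas : MeasurableSet (Set.Icc (0:ℝ) T \ S) :=
      measurableSet_Icc.diff hfin.measurableSet
    have hae1 : AEMeasurable σ (volume.restrict (Set.Icc (0:ℝ) T \ S)) :=
      hσcont.aemeasurable hmeas
    have hrest : volume.restrict (Set.Icc (0:ℝ) T \ S) = volume.restrict (Set.Icc (0:ℝ) T) := by
      apply Measure.restrict_congr_set
      apply MeasureTheory.diff_ae_eq_self.2
      have h0 : Set.Icc (0:ℝ) T ∩ S ⊆ S := Set.inter_subset_right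
      exact measure_mono_null h0 (hfin.measure_zero volume)
    rwa [hrest] at hae1
  have hσii : ∀ (k : ℕ) {x y : ℝ}, x ∈ Set.Icc (0:ℝ) T → y ∈ Set.Icc (0:ℝ) T → x ≤ y →
      IntervalIntegrable (fun u => σ u ^ k) volume x y := by
    intro k x y hx hy hxy
    rw [intervalIntegrable_iff, Set.uIoc_of_le hxy]
    have hsub : Set.Ioc x y ⊆ Set.Icc (0:ℝ) T := fun u hu =>
      ⟨le_trans hx.1 hu.1.le, le_trans hu.2 hy.2⟩
    constructor
    · exact ((hσae.mono_measure (Measure.restrict_mono hsub le_rfl)).pow_const k).aestronglyMeasurable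
    · apply MeasureTheory.HasFiniteIntegral.restrict_of_bounded (C := σhi ^ k)
        (measure_Ioc_lt_top)
      rw [ae_restrict_iff' measurableSet_Ioc]
      apply ae_of_all
      intro u hu
      have h1 := hbd u (hsub hu)
      rw [Real.norm_eq_abs, abs_pow]
      apply pow_le_pow_left₀ (abs_nonneg _)
      rw [abs_le]; constructor <;> linarith [hσlo.le.trans h1.1]
  have hσintlb : ∀ (k : ℕ) {x y : ℝ}, x ∈ Set.Icc (0:ℝ) T → y ∈ Set.Icc (0:ℝ) T → x ≤ y →
      (y - x) * σlo ^ k ≤ ∫ u in x..y, σ u ^ k := by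
    intro k x y hx hy hxy
    have := intervalIntegral.integral_mono_on (μ := volume) hxy
      (intervalIntegrable_const (c := σlo ^ k)) (hσii k hx hy hxy)
      (fun u hu => pow_le_pow_left₀ hσlo.le
        ((hbd u ⟨le_trans hx.1 hu.1, le_trans hu.2 hy.2⟩).1) k)
    rwa [intervalIntegral.integral_const, smul_eq_mul] at this
  have hσintub : ∀ (k : ℕ) {x y : ℝ}, x ∈ Set.Icc (0:ℝ) T → y ∈ Set.Icc (0:ℝ) T → x ≤ y →
      (∫ u in x..y, σ u ^ k) ≤ (y - x) * σhi ^ k := by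
    intro k x y hx hy hxy
    have := intervalIntegral.integral_mono_on (μ := volume) hxy
      (hσii k hx hy hxy) (intervalIntegrable_const (c := σhi ^ k))
      (fun u hu => by
        have h1 := hbd u ⟨le_trans hx.1 hu.1, le_trans hu.2 hy.2⟩
        exact pow_le_pow_left₀ (hσlo.le.trans h1.1) h1.2 k)
    rwa [intervalIntegral.integral_const, smul_eq_mul] at this
  -- block endpoints facts
  have hblock : ∀ B : ℕ, 1 ≤ B → ∀ i : ℕ, i < B →
      (i:ℝ)*T/B ∈ Set.Icc (0:ℝ) T ∧ ((i:ℝ)+1)*T/B ∈ Set.Icc (0:ℝ) T ∧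
        (i:ℝ)*T/B ≤ ((i:ℝ)+1)*T/B ∧ ((i:ℝ)+1)*T/B - (i:ℝ)*T/B = T/B := by
    intro B hB i hiB
    have hb : (0:ℝ) < B := by exact_mod_cast hB
    have hi1 : ((i:ℝ)+1) ≤ (B:ℝ) := by exact_mod_cast hiB
    have hi0 : (0:ℝ) ≤ (i:ℝ) := Nat.cast_nonneg i
    refine ⟨⟨by positivity, ?_⟩, ⟨by positivity, ?_⟩, ?_,
      by rw [← sub_div, show ((i:ℝ)+1)*T - (i:ℝ)*T = T by ring]⟩
    · rw [div_le_iff₀ hb]; nlinarith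
    · rw [div_le_iff₀ hb]; nlinarith
    · apply div_le_div_of_nonneg_right (by nlinarith) hb.le
  -- jump separation
  obtain ⟨δ, hδpos, hδsep⟩ : ∃ δ > 0, ∀ p q : Fin N, p ≠ q → δ ≤ |τ p - τ q| := by
    set s := (Finset.univ ×ˢ Finset.univ).filter (fun pq : Fin N × Fin N => pq.1 ≠ pq.2) with hs
    by_cases hne : s.Nonempty
    · obtain ⟨pq, hmem, hmin⟩ := Finset.exists_min_image s (fun pq => |τ pq.1 - τ pq.2|) hne
      have hpq : pq.1 ≠ pq.2 := (Finset.mem_filter.1 hmem).2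
      refine ⟨|τ pq.1 - τ pq.2|, ?_, ?_⟩
      · rw [gt_iff_lt, abs_pos, sub_ne_zero]
        exact fun h => hpq (hτmono.injective h)
      · intro p q hpqne
        exact hmin (p, q) (Finset.mem_filter.2 ⟨by simp, hpqne⟩)
    · refine ⟨1, one_pos, fun p q hpq => absurd ⟨(p,q), Finset.mem_filter.2 ⟨by simp, hpq⟩⟩ hne⟩
  -- Step A: nonnegativity, and basic per-block facts
  have hden : ∀ B : ℕ, 1 ≤ B → ∀ i : ℕ, i < B →
      (T/B) * Ahi⁻¹ ≤ ∫ s in ((i:ℝ)*T/B)..(((i:ℝ)+1)*T/B), (α s)⁻¹ := by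
    intro B hB i hiB
    obtain ⟨hx, hy, hxy, hlen⟩ := hblock B hB i hiB
    have := hdenlb hx hy hxy
    rwa [hlen] at this
  have hQVlb : ∀ B : ℕ, 1 ≤ B → ∀ i : ℕ, i < B →
      (T/B) * σlo^2 ≤ QVjump T σ τ j B i := by
    intro B hB i hiB
    obtain ⟨hx, hy, hxy, hlen⟩ := hblock B hB i hiB
    have h1 := hσintlb 2 hx hy hxy
    rw [hlen] at h1
    have h2 : (0:ℝ) ≤ ∑ p : Fin N,
        (if (i:ℝ)*T/B < τ p ∧ τ p ≤ ((i:ℝ)+1)*T/B then j p ^ 2 else 0) :=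
      Finset.sum_nonneg (fun p _ => by positivity)
    unfold QVjump
    linarith
  have hQnonneg : ∀ B : ℕ, 1 ≤ B → ∀ i : ℕ, i < B → 0 ≤ Qjump T σ σm τ j B i := by
    intro B hB i hiB
    obtain ⟨hx, hy, hxy, hlen⟩ := hblock B hB i hiB
    have h1 := hσintlb 4 hx hy hxy
    rw [hlen] at h1
    have hσlo4 : (0:ℝ) ≤ (T/B) * σlo^4 := by
      have hb : (0:ℝ) < B := by exact_mod_cast hB
      positivity
    have h2 : (0:ℝ) ≤ ∑ p : Fin N,
        (if (i:ℝ)*T/B < τ p ∧ τ p ≤ ((i:ℝ)+1)*T/B then j p ^ 2 * (σ (τ p)^2 + σm (τ p)^2) else 0) :=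
      Finset.sum_nonneg (fun p _ => by positivity)
    unfold Qjump
    linarith
  have hsigbar_nonneg : ∀ B i : ℕ, 0 ≤ sigBarJump T σ τ j B i := by
    intro B i
    unfold sigBarJump
    rcases le_or_gt 0 ((T/B)⁻¹ * QVjump T σ τ j B i) with h | h
    · exact Real.rpow_nonneg h _
    · rw [Real.rpow_def_of_neg h, show (1:ℝ)/2*Real.pi = Real.pi/2 by ring,
        Real.cos_pi_div_two, mul_zero]
  have hterm_nonneg : ∀ B : ℕ, 1 ≤ B → ∀ i : ℕ, i < B → 0 ≤ termB T a σ σm α τ j B i := by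
    intro B hB i hiB
    have hb : (0:ℝ) < B := by exact_mod_cast hB
    have hd : 0 < ∫ s in ((i:ℝ)*T/B)..(((i:ℝ)+1)*T/B), (α s)⁻¹ :=
      lt_of_lt_of_le (by positivity) (hden B hB i hiB)
    unfold termB
    have h1 : (0:ℝ) ≤ ((∫ s in (0:ℝ)..T, (α s)⁻¹) /
        (∫ s in ((i:ℝ)*T/B)..(((i:ℝ)+1)*T/B), (α s)⁻¹)) ^ ((1:ℝ)/2) :=
      Real.rpow_nonneg (div_nonneg hI0.le hd.le) _
    have h2 : (0:ℝ) ≤ 5 * a * (T/B) ^ ((1:ℝ)/2) * Qjump T σ σm τ j B i /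
        sigBarJump T σ τ j B i := by
      apply div_nonneg _ (hsigbar_nonneg B i)
      have := hQnonneg B hB i hiB
      have h3 : (0:ℝ) ≤ (T/B) ^ ((1:ℝ)/2) := Real.rpow_nonneg (by positivity) _
      positivity
    have h3 : (0:ℝ) ≤ 3 * a * sigBarJump T σ τ j B i ^ 3 * (T/B) ^ ((3:ℝ)/2) := by
      have h4 := hsigbar_nonneg B i
      have h5 : (0:ℝ) ≤ (T/B) ^ ((3:ℝ)/2) := Real.rpow_nonneg (by positivity) _
      positivity
    positivity
  have hσhi : 0 < σhi := lt_of_lt_of_le hσlo hσ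
  set C₂ := ((∫ s in (0:ℝ)..T, (α s)⁻¹) * Ahi) ^ ((1:ℝ)/2) * ((5*a*σhi^4/σlo + 3*a*σhi^3) * T)
    with hC₂def
  have hC₂nonneg : 0 ≤ C₂ := by
    have h1 : (0:ℝ) ≤ ((∫ s in (0:ℝ)..T, (α s)⁻¹) * Ahi) ^ ((1:ℝ)/2) :=
      Real.rpow_nonneg (by positivity) _
    have h2 : (0:ℝ) ≤ (5*a*σhi^4/σlo + 3*a*σhi^3) * T := by positivity
    positivity
  have hstepB : ∀ B : ℕ, 1 ≤ B → ∀ i : ℕ, i < B →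
      (∀ p : Fin N, ¬((i:ℝ)*T/B < τ p ∧ τ p ≤ ((i:ℝ)+1)*T/B)) →
      termB T a σ σm α τ j B i ≤ C₂ * (B:ℝ)⁻¹ := by
    intro B hB i hiB hnoj
    have hb : (0:ℝ) < B := by exact_mod_cast hB
    obtain ⟨hx, hy, hxy, hlen⟩ := hblock B hB i hiB
    have hΔ : 0 < T/B := by positivity
    have hQV : QVjump T σ τ j B i = ∫ u in ((i:ℝ)*T/B)..(((i:ℝ)+1)*T/B), σ u ^ 2 := by
      unfold QVjump
      rw [Finset.sum_eq_zero (fun p _ => if_neg (hnoj p)), add_zero]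
    have hQVl : (T/B) * σlo^2 ≤ QVjump T σ τ j B i := hQVlb B hB i hiB
    have hQVu : QVjump T σ τ j B i ≤ (T/B) * σhi^2 := by
      rw [hQV]
      have h2 := hσintub 2 hx hy hxy
      rwa [hlen] at h2
    have hz1 : σlo^2 ≤ (T/B)⁻¹ * QVjump T σ τ j B i := by
      rw [inv_mul_eq_div, le_div_iff₀ hΔ]
      linarith
    have hz2 : (T/B)⁻¹ * QVjump T σ τ j B i ≤ σhi^2 := by
      rw [inv_mul_eq_div, div_le_iff₀ hΔ]
      linarith
    have hsb1 : σlo ≤ sigBarJump T σ τ j B i := by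
      unfold sigBarJump
      calc σlo = (σlo^2)^((1:ℝ)/2) := (sq_rpow_half hσlo.le).symm
      _ ≤ _ := Real.rpow_le_rpow (by positivity) hz1 (by norm_num)
    have hsb2 : sigBarJump T σ τ j B i ≤ σhi := by
      unfold sigBarJump
      calc ((T/B)⁻¹ * QVjump T σ τ j B i)^((1:ℝ)/2)
          ≤ (σhi^2)^((1:ℝ)/2) :=
            Real.rpow_le_rpow (le_trans (by positivity) hz1) hz2 (by norm_num)
      _ = σhi := sq_rpow_half hσhi.le
    have hQu : Qjump T σ σm τ j B i ≤ (T/B) * σhi^4 := by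
      unfold Qjump
      rw [Finset.sum_eq_zero (fun p _ => if_neg (hnoj p)), add_zero]
      have h2 := hσintub 4 hx hy hxy
      rwa [hlen] at h2
    have hQn : 0 ≤ Qjump T σ σm τ j B i := hQnonneg B hB i hiB
    have hd : (T/B)*Ahi⁻¹ ≤ ∫ s in ((i:ℝ)*T/B)..(((i:ℝ)+1)*T/B), (α s)⁻¹ := hden B hB i hiB
    have hdpos : 0 < ∫ s in ((i:ℝ)*T/B)..(((i:ℝ)+1)*T/B), (α s)⁻¹ :=
      lt_of_lt_of_le (by positivity) hd
    have hr : (∫ s in (0:ℝ)..T, (α s)⁻¹) / (∫ s in ((i:ℝ)*T/B)..(((i:ℝ)+1)*T/B), (α s)⁻¹)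
        ≤ (∫ s in (0:ℝ)..T, (α s)⁻¹) * Ahi / (T/B) := by
      rw [div_le_div_iff₀ hdpos hΔ]
      have h6 : T/B ≤ Ahi * ∫ s in ((i:ℝ)*T/B)..(((i:ℝ)+1)*T/B), (α s)⁻¹ := by
        calc T/B = Ahi * ((T/B)*Ahi⁻¹) := by
              field_simp
        _ ≤ _ := mul_le_mul_of_nonneg_left hd hAhipos.le
      nlinarith [mul_le_mul_of_nonneg_left h6 hI0.le]
    have hr2 : ((∫ s in (0:ℝ)..T, (α s)⁻¹) /
        (∫ s in ((i:ℝ)*T/B)..(((i:ℝ)+1)*T/B), (α s)⁻¹)) ^ ((1:ℝ)/2)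
        ≤ ((∫ s in (0:ℝ)..T, (α s)⁻¹) * Ahi / (T/B)) ^ ((1:ℝ)/2) :=
      Real.rpow_le_rpow (div_nonneg hI0.le hdpos.le) hr (by norm_num)
    have hrpow32 : (T/B)^((3:ℝ)/2) = (T/B)^((1:ℝ)/2) * (T/B) := by
      rw [show ((3:ℝ)/2) = (1:ℝ)/2 + 1 by norm_num, Real.rpow_add hΔ, Real.rpow_one]
    have hp1 : (0:ℝ) < (T/B)^((1:ℝ)/2) := Real.rpow_pos_of_pos hΔ _
    have hp3 : (0:ℝ) < (T/B)^((3:ℝ)/2) := Real.rpow_pos_of_pos hΔ _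
    have ht1 : 5*a*(T/B)^((1:ℝ)/2) * Qjump T σ σm τ j B i / sigBarJump T σ τ j B i
        ≤ 5*a*σhi^4/σlo * (T/B)^((3:ℝ)/2) := by
      have h7 : Qjump T σ σm τ j B i / sigBarJump T σ τ j B i ≤ (T/B)*σhi^4/σlo :=
        div_le_div₀ (by positivity) hQu hσlo hsb1
      calc 5*a*(T/B)^((1:ℝ)/2) * Qjump T σ σm τ j B i / sigBarJump T σ τ j B i
          = 5*a*(T/B)^((1:ℝ)/2) * (Qjump T σ σm τ j B i / sigBarJump T σ τ j B i) := by
            ring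
      _ ≤ 5*a*(T/B)^((1:ℝ)/2) * ((T/B)*σhi^4/σlo) := by
            apply mul_le_mul_of_nonneg_left h7 (by positivity)
      _ = 5*a*σhi^4/σlo * ((T/B)^((1:ℝ)/2) * (T/B)) := by ring
      _ = 5*a*σhi^4/σlo * (T/B)^((3:ℝ)/2) := by rw [← hrpow32]
    have ht2 : 3*a*sigBarJump T σ τ j B i ^ 3 * (T/B)^((3:ℝ)/2)
        ≤ 3*a*σhi^3 * (T/B)^((3:ℝ)/2) := by
      have h9 := hsigbar_nonneg B i
      gcongr
    have hbrn : 0 ≤ 5*a*(T/B)^((1:ℝ)/2) * Qjump T σ σm τ j B i / sigBarJump T σ τ j B i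
        + 3*a*sigBarJump T σ τ j B i ^ 3 * (T/B)^((3:ℝ)/2) := by
      have h9 := hsigbar_nonneg B i
      have h10 : 0 ≤ 5*a*(T/B)^((1:ℝ)/2) * Qjump T σ σm τ j B i / sigBarJump T σ τ j B i := by
        apply div_nonneg _ h9
        positivity
      positivity
    have hkey : termB T a σ σm α τ j B i
        ≤ ((∫ s in (0:ℝ)..T, (α s)⁻¹) * Ahi / (T/B)) ^ ((1:ℝ)/2) *
          ((5*a*σhi^4/σlo + 3*a*σhi^3) * (T/B)^((3:ℝ)/2)) := by
      unfold termB
      apply mul_le_mul hr2 _ hbrn (Real.rpow_nonneg (by positivity) _)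
      calc 5*a*(T/B)^((1:ℝ)/2) * Qjump T σ σm τ j B i / sigBarJump T σ τ j B i
          + 3*a*sigBarJump T σ τ j B i ^ 3 * (T/B)^((3:ℝ)/2)
          ≤ 5*a*σhi^4/σlo * (T/B)^((3:ℝ)/2) + 3*a*σhi^3 * (T/B)^((3:ℝ)/2) := add_le_add ht1 ht2
      _ = (5*a*σhi^4/σlo + 3*a*σhi^3) * (T/B)^((3:ℝ)/2) := by ring
    refine hkey.trans (le_of_eq ?_)
    rw [Real.div_rpow (by positivity) hΔ.le, hrpow32, hC₂def]
    field_simp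
  -- ============== Step C: jump-block limits ==============
  have hstepC : ∀ p : Fin N,
      Tendsto (fun B : ℕ => (B:ℝ) ^ (-(1:ℝ)/2) * termB T a σ σm α τ j B (blockIdx T (τ p) B))
        atTop (nhds (3*a*T^(-(1:ℝ)/2) * (∫ s in (0:ℝ)..T, (α s)⁻¹) ^ ((1:ℝ)/2) *
          ((α (τ p)) ^ ((1:ℝ)/2) * |j p| ^ 3))) := by
    intro p
    obtain ⟨htp0, htpT⟩ := hτ p
    have hαp : 0 < α (τ p) := hαpos (τ p) ⟨htp0.le, htpT⟩
    have hjp2 : (0:ℝ) < j p ^ 2 := by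
      have := hj p
      positivity
    have hblkp : ∀ B : ℕ, 1 ≤ B →
        (((blockIdx T (τ p) B : ℝ) * T / B < τ p ∧
          τ p ≤ ((blockIdx T (τ p) B : ℝ) + 1) * T / B) ∧ blockIdx T (τ p) B < B) :=
      fun B hB => blockIdx_spec hT htp0 htpT hB
    have hBev : ∀ᶠ B : ℕ in atTop, 1 ≤ B := eventually_ge_atTop 1
    have hδev : ∀ᶠ B : ℕ in atTop, T/(B:ℝ) < δ :=
      (tendsto_const_div_atTop_nhds_zero_nat T).eventually_lt_const hδpos
    -- collapse of the jump sums
    have hsumQV : ∀ᶠ B : ℕ in atTop,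
        (∑ q : Fin N, if (blockIdx T (τ p) B : ℝ) * T / B < τ q ∧
            τ q ≤ ((blockIdx T (τ p) B : ℝ) + 1) * T / B then j q ^ 2 else 0) = j p ^ 2 := by
      filter_upwards [hBev, hδev] with B hB hBδ
      rw [Finset.sum_eq_single_of_mem p (Finset.mem_univ p)
        (fun q _ hq => if_neg (fun hc => ?_)), if_pos (hblkp B hB).1]
      have h1 := same_block_close hc (hblkp B hB).1
      have h2 := hδsep q p hq
      obtain ⟨_, _, _, hlen⟩ := hblock B hB _ (hblkp B hB).2
      rw [hlen] at h1
      linarith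
    have hsumQ : ∀ᶠ B : ℕ in atTop,
        (∑ q : Fin N, if (blockIdx T (τ p) B : ℝ) * T / B < τ q ∧
            τ q ≤ ((blockIdx T (τ p) B : ℝ) + 1) * T / B then
            j q ^ 2 * (σ (τ q) ^ 2 + σm (τ q) ^ 2) else 0)
          = j p ^ 2 * (σ (τ p) ^ 2 + σm (τ p) ^ 2) := by
      filter_upwards [hBev, hδev] with B hB hBδ
      rw [Finset.sum_eq_single_of_mem p (Finset.mem_univ p)
        (fun q _ hq => if_neg (fun hc => ?_)), if_pos (hblkp B hB).1]
      have h1 := same_block_close hc (hblkp B hB).1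
      have h2 := hδsep q p hq
      obtain ⟨_, _, _, hlen⟩ := hblock B hB _ (hblkp B hB).2
      rw [hlen] at h1
      linarith
    -- the block integrals of σ^k tend to 0
    have hintzero : ∀ k : ℕ, Tendsto (fun B : ℕ =>
        ∫ u in ((blockIdx T (τ p) B : ℝ) * T / B)..(((blockIdx T (τ p) B : ℝ) + 1) * T / B),
          σ u ^ k) atTop (nhds 0) := by
      intro k
      apply squeeze_zero_norm' (a := fun B : ℕ => T/(B:ℝ) * σhi ^ k)
      · filter_upwards [hBev] with B hB
        obtain ⟨hx, hy, hxy, hlen⟩ := hblock B hB _ (hblkp B hB).2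
        have h1 := hσintlb k hx hy hxy
        have h2 := hσintub k hx hy hxy
        rw [hlen] at h1 h2
        have hb : (0:ℝ) < B := by exact_mod_cast hB
        have h3 : (0:ℝ) ≤ T/(B:ℝ) * σlo ^ k := by positivity
        rw [Real.norm_eq_abs, abs_le]
        constructor <;> linarith
      · have := (tendsto_const_div_atTop_nhds_zero_nat T).mul_const (σhi ^ k)
        rwa [zero_mul] at this
    -- QV limit
    have hQVlim : Tendsto (fun B : ℕ => QVjump T σ τ j B (blockIdx T (τ p) B)) atTop
        (nhds (j p ^ 2)) := by
      apply Tendsto.congr' (f₁ := fun B : ℕ =>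
        (∫ u in ((blockIdx T (τ p) B : ℝ) * T / B)..(((blockIdx T (τ p) B : ℝ) + 1) * T / B),
          σ u ^ 2) + (∑ q : Fin N, if (blockIdx T (τ p) B : ℝ) * T / B < τ q ∧
            τ q ≤ ((blockIdx T (τ p) B : ℝ) + 1) * T / B then j q ^ 2 else 0))
      · exact Filter.Eventually.of_forall (fun B => rfl)
      · have h0 := (hintzero 2).add (tendsto_const_nhds (x := j p ^ 2) (f := atTop))
        rw [zero_add] at h0
        apply Tendsto.congr' _ h0
        filter_upwards [hsumQV] with B hB
        rw [hB]
    -- Q limit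
    have hQlim : Tendsto (fun B : ℕ => Qjump T σ σm τ j B (blockIdx T (τ p) B)) atTop
        (nhds (j p ^ 2 * (σ (τ p) ^ 2 + σm (τ p) ^ 2))) := by
      have h0 := (hintzero 4).add
        (tendsto_const_nhds (x := j p ^ 2 * (σ (τ p) ^ 2 + σm (τ p) ^ 2)) (f := atTop))
      rw [zero_add] at h0
      apply Tendsto.congr' _ h0
      filter_upwards [hsumQ] with B hB
      unfold Qjump
      rw [hB]
    -- denominator limit : B * ∫_block α⁻¹ → T * (α τp)⁻¹
    have hdenlim : Tendsto (fun B : ℕ => (B:ℝ) *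
        ∫ s in ((blockIdx T (τ p) B : ℝ) * T / B)..(((blockIdx T (τ p) B : ℝ) + 1) * T / B),
          (α s)⁻¹) atTop (nhds (T * (α (τ p))⁻¹)) := by
      rw [Metric.tendsto_atTop]
      intro ε hε
      have hcw : ContinuousWithinAt (fun u => (α u)⁻¹) (Set.Icc 0 T) (τ p) :=
        hαinv (τ p) ⟨htp0.le, htpT⟩
      rw [ContinuousWithinAt, Metric.tendsto_nhdsWithin_nhds] at hcw
      obtain ⟨δ', hδ'pos, hδ'⟩ := hcw (ε/(2*T)) (by positivity)
      obtain ⟨B₁, hB₁⟩ := exists_nat_gt (T/δ')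
      refine ⟨max B₁ 1, fun B hBge => ?_⟩
      have hB : 1 ≤ B := le_trans (le_max_right _ _) hBge
      have hb : (0:ℝ) < B := by exact_mod_cast hB
      have hBB1 : (B₁:ℝ) ≤ B := by exact_mod_cast le_trans (le_max_left _ _) hBge
      have hTBδ' : T/(B:ℝ) < δ' := by
        rw [div_lt_iff₀ hb]
        have h1 : T/δ' < (B:ℝ) := lt_of_lt_of_le hB₁ hBB1
        rw [div_lt_iff₀ hδ'pos] at h1
        linarith
      obtain ⟨⟨hxlt, hyle⟩, hιB⟩ := hblkp B hB
      obtain ⟨hx, hy, hxy, hlen⟩ := hblock B hB _ hιB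
      have hsub2 : ∀ u ∈ Set.uIoc ((blockIdx T (τ p) B : ℝ) * T / B)
          (((blockIdx T (τ p) B : ℝ) + 1) * T / B),
          ‖(α u)⁻¹ - (α (τ p))⁻¹‖ ≤ ε/(2*T) := by
        rw [Set.uIoc_of_le hxy]
        intro u hu
        have huI : u ∈ Set.Icc (0:ℝ) T := ⟨le_trans hx.1 hu.1.le, le_trans hu.2 hy.2⟩
        have hclose : dist u (τ p) < δ' := by
          rw [Real.dist_eq]
          have h5 := same_block_close ⟨hu.1, hu.2⟩ ⟨hxlt, hyle⟩
          rw [hlen] at h5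
          linarith
        have := hδ' huI hclose
        rw [Real.dist_eq] at this
        exact this.le
      have hint := intervalIntegral.norm_integral_le_of_norm_le_const hsub2
      have hsplit : (∫ s in ((blockIdx T (τ p) B : ℝ) * T / B)..(((blockIdx T (τ p) B : ℝ) + 1) * T / B),
            ((α s)⁻¹ - (α (τ p))⁻¹))
          = (∫ s in ((blockIdx T (τ p) B : ℝ) * T / B)..(((blockIdx T (τ p) B : ℝ) + 1) * T / B),
              (α s)⁻¹) - (T/B) * (α (τ p))⁻¹ := by
        rw [intervalIntegral.integral_sub (hαii hx hy) intervalIntegrable_const,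
          intervalIntegral.integral_const, smul_eq_mul, hlen]
      rw [hsplit] at hint
      have habs : |(((blockIdx T (τ p) B : ℝ) + 1) * T / B) - ((blockIdx T (τ p) B : ℝ) * T / B)|
          = T/B := by
        rw [hlen, abs_of_pos (by positivity)]
      rw [habs, Real.norm_eq_abs] at hint
      rw [Real.dist_eq]
      have hkey : |(B:ℝ) * (∫ s in ((blockIdx T (τ p) B : ℝ) * T / B)..(((blockIdx T (τ p) B : ℝ) + 1) * T / B), (α s)⁻¹)
          - T * (α (τ p))⁻¹|
          = (B:ℝ) * |(∫ s in ((blockIdx T (τ p) B : ℝ) * T / B)..(((blockIdx T (τ p) B : ℝ) + 1) * T / B), (α s)⁻¹)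
              - (T/B) * (α (τ p))⁻¹| := by
        rw [← abs_of_pos hb, ← abs_mul]
        congr 1
        rw [abs_of_pos hb, mul_sub]
        congr 1
        field_simp
      rw [hkey]
      calc (B:ℝ) * |(∫ s in ((blockIdx T (τ p) B : ℝ) * T / B)..(((blockIdx T (τ p) B : ℝ) + 1) * T / B), (α s)⁻¹)
              - (T/B) * (α (τ p))⁻¹|
          ≤ (B:ℝ) * (ε/(2*T) * (T/B)) := mul_le_mul_of_nonneg_left hint hb.le
      _ = ε/2 := by field_simp
      _ < ε := by linarith
    -- ratio limit
    have hTαpos : 0 < T * (α (τ p))⁻¹ := by positivity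
    have hIpos2 : 0 < (∫ s in (0:ℝ)..T, (α s)⁻¹) / (T * (α (τ p))⁻¹) := div_pos hI0 hTαpos
    have hratio : Tendsto (fun B : ℕ => ((∫ s in (0:ℝ)..T, (α s)⁻¹) /
        ((B:ℝ) * ∫ s in ((blockIdx T (τ p) B : ℝ) * T / B)..(((blockIdx T (τ p) B : ℝ) + 1) * T / B),
          (α s)⁻¹)) ^ ((1:ℝ)/2)) atTop
        (nhds (((∫ s in (0:ℝ)..T, (α s)⁻¹) / (T * (α (τ p))⁻¹)) ^ ((1:ℝ)/2))) := by
      apply ((Real.continuousAt_rpow_const _ _ (Or.inl hIpos2.ne')).tendsto).comp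
      exact tendsto_const_nhds.div hdenlim hTαpos.ne'
    -- t2 limit
    have hQV32 : Tendsto (fun B : ℕ =>
        3*a*(QVjump T σ τ j B (blockIdx T (τ p) B)) ^ ((3:ℝ)/2)) atTop
        (nhds (3*a*|j p|^3)) := by
      have hc : ContinuousAt (fun x : ℝ => x ^ ((3:ℝ)/2)) (j p ^ 2) :=
        Real.continuousAt_rpow_const _ _ (Or.inl hjp2.ne')
      have h1 := (hc.tendsto.comp hQVlim).const_mul (3*a)
      have h2 : (j p ^ 2) ^ ((3:ℝ)/2) = |j p| ^ 3 := by
        rw [← sq_abs]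
        exact sq_rpow_threehalf (abs_nonneg _)
      rw [h2] at h1
      exact h1
    -- t1 limit
    have ht1lim : Tendsto (fun B : ℕ =>
        5*a*(T/(B:ℝ))^((1:ℝ)/2) * Qjump T σ σm τ j B (blockIdx T (τ p) B) /
          sigBarJump T σ τ j B (blockIdx T (τ p) B)) atTop (nhds 0) := by
      apply squeeze_zero' (g := fun B : ℕ => 5*a/|j p| *
        ((T/(B:ℝ)) * Qjump T σ σm τ j B (blockIdx T (τ p) B)))
      · filter_upwards [hBev] with B hB
        have h1 := hQnonneg B hB _ (hblkp B hB).2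
        have h2 := hsigbar_nonneg B (blockIdx T (τ p) B)
        have h3 : (0:ℝ) ≤ (T/(B:ℝ))^((1:ℝ)/2) := Real.rpow_nonneg (by positivity) _
        apply div_nonneg _ h2
        positivity
      · filter_upwards [hBev] with B hB
        have hb : (0:ℝ) < B := by exact_mod_cast hB
        have hΔ : 0 < T/(B:ℝ) := by positivity
        have hQn := hQnonneg B hB _ (hblkp B hB).2
        have hjabs : (0:ℝ) < |j p| := abs_pos.2 (hj p)
        -- QV ≥ j p ^ 2
        have hQVge : j p ^ 2 ≤ QVjump T σ τ j B (blockIdx T (τ p) B) := by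
          obtain ⟨hx, hy, hxy, hlen⟩ := hblock B hB _ (hblkp B hB).2
          have h4 := hσintlb 2 hx hy hxy
          rw [hlen] at h4
          have h5 : (0:ℝ) ≤ T/(B:ℝ) * σlo^2 := by positivity
          have h6 : j p ^ 2 ≤ ∑ q : Fin N,
              if (blockIdx T (τ p) B : ℝ) * T / B < τ q ∧
                τ q ≤ ((blockIdx T (τ p) B : ℝ) + 1) * T / B then j q ^ 2 else 0 := by
            have h7 := Finset.single_le_sum (f := fun q : Fin N =>
              if (blockIdx T (τ p) B : ℝ) * T / B < τ q ∧
                τ q ≤ ((blockIdx T (τ p) B : ℝ) + 1) * T / B then j q ^ 2 else 0)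
              (fun q _ => by positivity) (Finset.mem_univ p)
            simpa only [if_pos ((hblkp B hB).1)] using h7
          unfold QVjump
          linarith
        -- lower bound for sigBar
        have hjd : |j p| / (T/(B:ℝ))^((1:ℝ)/2) ≤ sigBarJump T σ τ j B (blockIdx T (τ p) B) := by
          unfold sigBarJump
          have h8 : ((T/(B:ℝ))⁻¹ * j p ^ 2) ^ ((1:ℝ)/2)
              ≤ ((T/(B:ℝ))⁻¹ * QVjump T σ τ j B (blockIdx T (τ p) B)) ^ ((1:ℝ)/2) :=
            Real.rpow_le_rpow (by positivity)
              (mul_le_mul_of_nonneg_left hQVge (by positivity)) (by norm_num)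
          have h9 : ((T/(B:ℝ))⁻¹ * j p ^ 2) ^ ((1:ℝ)/2) = |j p| / (T/(B:ℝ))^((1:ℝ)/2) := by
            rw [Real.mul_rpow (by positivity) hjp2.le, Real.inv_rpow hΔ.le,
              ← sq_abs (j p), sq_rpow_half (abs_nonneg _)]
            ring
          rw [← h9]
          exact h8
        have hjdpos : 0 < |j p| / (T/(B:ℝ))^((1:ℝ)/2) :=
          div_pos hjabs (Real.rpow_pos_of_pos hΔ _)
        have h10 : 5*a*(T/(B:ℝ))^((1:ℝ)/2) * Qjump T σ σm τ j B (blockIdx T (τ p) B) /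
            sigBarJump T σ τ j B (blockIdx T (τ p) B)
            ≤ 5*a*(T/(B:ℝ))^((1:ℝ)/2) * Qjump T σ σm τ j B (blockIdx T (τ p) B) /
              (|j p| / (T/(B:ℝ))^((1:ℝ)/2)) := by
          have hnum : (0:ℝ) ≤ 5*a*(T/(B:ℝ))^((1:ℝ)/2) * Qjump T σ σm τ j B (blockIdx T (τ p) B) := by
            have h3 : (0:ℝ) ≤ (T/(B:ℝ))^((1:ℝ)/2) := Real.rpow_nonneg hΔ.le _
            positivity
          exact div_le_div_of_nonneg_left hnum hjdpos hjd
        refine h10.trans (le_of_eq ?_)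
        have hhalf : (T/(B:ℝ))^((1:ℝ)/2) * (T/(B:ℝ))^((1:ℝ)/2) = T/(B:ℝ) := by
          rw [← Real.rpow_add hΔ]
          norm_num
        rw [div_div_eq_mul_div]
        rw [show 5*a*(T/(B:ℝ))^((1:ℝ)/2) * Qjump T σ σm τ j B (blockIdx T (τ p) B) * (T/(B:ℝ))^((1:ℝ)/2)
          = 5*a*((T/(B:ℝ))^((1:ℝ)/2) * (T/(B:ℝ))^((1:ℝ)/2)) * Qjump T σ σm τ j B (blockIdx T (τ p) B) by ring,
          hhalf]
        ring
      · have h11 : Tendsto (fun B : ℕ => (T/(B:ℝ)) * Qjump T σ σm τ j B (blockIdx T (τ p) B))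
            atTop (nhds (0 * (j p ^ 2 * (σ (τ p) ^ 2 + σm (τ p) ^ 2)))) :=
          (tendsto_const_div_atTop_nhds_zero_nat T).mul hQlim
        rw [zero_mul] at h11
        have h12 := h11.const_mul (5*a/|j p|)
        rwa [mul_zero] at h12
    -- assemble
    have hGlim : Tendsto (fun B : ℕ =>
        ((∫ s in (0:ℝ)..T, (α s)⁻¹) /
          ((B:ℝ) * ∫ s in ((blockIdx T (τ p) B : ℝ) * T / B)..(((blockIdx T (τ p) B : ℝ) + 1) * T / B),
            (α s)⁻¹)) ^ ((1:ℝ)/2) *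
          (5*a*(T/(B:ℝ))^((1:ℝ)/2) * Qjump T σ σm τ j B (blockIdx T (τ p) B) /
              sigBarJump T σ τ j B (blockIdx T (τ p) B)
            + 3*a*(QVjump T σ τ j B (blockIdx T (τ p) B)) ^ ((3:ℝ)/2))) atTop
        (nhds (((∫ s in (0:ℝ)..T, (α s)⁻¹) / (T * (α (τ p))⁻¹)) ^ ((1:ℝ)/2) *
          (0 + 3*a*|j p|^3))) := hratio.mul (ht1lim.add hQV32)
    -- identify limit value
    have hlimval : ((∫ s in (0:ℝ)..T, (α s)⁻¹) / (T * (α (τ p))⁻¹)) ^ ((1:ℝ)/2) *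
        (0 + 3*a*|j p|^3)
        = 3*a*T^(-(1:ℝ)/2) * (∫ s in (0:ℝ)..T, (α s)⁻¹) ^ ((1:ℝ)/2) *
          ((α (τ p)) ^ ((1:ℝ)/2) * |j p| ^ 3) := by
      have h1 : (∫ s in (0:ℝ)..T, (α s)⁻¹) / (T * (α (τ p))⁻¹)
          = (∫ s in (0:ℝ)..T, (α s)⁻¹) * α (τ p) / T := by
        field_simp
      rw [h1, Real.div_rpow (by positivity) hT.le,
        Real.mul_rpow hI0.le hαp.le,
        show (-(1:ℝ)/2) = -((1:ℝ)/2) by norm_num, Real.rpow_neg hT.le]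
      field_simp
      ring
    rw [hlimval] at hGlim
    -- eventual equality with the actual term
    apply Tendsto.congr' _ hGlim
    filter_upwards [hBev] with B hB
    have hb : (0:ℝ) < B := by exact_mod_cast hB
    have hΔ : 0 < T/(B:ℝ) := by positivity
    obtain ⟨hx, hy, hxy, hlen⟩ := hblock B hB _ (hblkp B hB).2
    have hdpos : 0 < ∫ s in ((blockIdx T (τ p) B : ℝ) * T / B)..(((blockIdx T (τ p) B : ℝ) + 1) * T / B), (α s)⁻¹ :=
      lt_of_lt_of_le (by positivity) (hden B hB _ (hblkp B hB).2)
    have hQVpos : 0 < QVjump T σ τ j B (blockIdx T (τ p) B) :=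
      lt_of_lt_of_le (by positivity) (hQVlb B hB _ (hblkp B hB).2)
    -- rewrite the ratio part
    have he1 : (∫ s in (0:ℝ)..T, (α s)⁻¹) /
        ((B:ℝ) * ∫ s in ((blockIdx T (τ p) B : ℝ) * T / B)..(((blockIdx T (τ p) B : ℝ) + 1) * T / B), (α s)⁻¹)
        = ((∫ s in (0:ℝ)..T, (α s)⁻¹) /
          (∫ s in ((blockIdx T (τ p) B : ℝ) * T / B)..(((blockIdx T (τ p) B : ℝ) + 1) * T / B), (α s)⁻¹))
          * ((B:ℝ))⁻¹ := by
      field_simp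
    have he2 : ((∫ s in (0:ℝ)..T, (α s)⁻¹) /
        ((B:ℝ) * ∫ s in ((blockIdx T (τ p) B : ℝ) * T / B)..(((blockIdx T (τ p) B : ℝ) + 1) * T / B), (α s)⁻¹)) ^ ((1:ℝ)/2)
        = (B:ℝ) ^ (-(1:ℝ)/2) * ((∫ s in (0:ℝ)..T, (α s)⁻¹) /
          (∫ s in ((blockIdx T (τ p) B : ℝ) * T / B)..(((blockIdx T (τ p) B : ℝ) + 1) * T / B), (α s)⁻¹)) ^ ((1:ℝ)/2) := by
      rw [he1, Real.mul_rpow (div_nonneg hI0.le hdpos.le) (by positivity),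
        Real.inv_rpow (by positivity), ← Real.rpow_neg (by positivity),
        show (-((1:ℝ)/2)) = (-(1:ℝ)/2) by norm_num]
      ring
    -- rewrite the sigBar³ part
    have he3 : sigBarJump T σ τ j B (blockIdx T (τ p) B) ^ 3 * (T/(B:ℝ))^((3:ℝ)/2)
        = (QVjump T σ τ j B (blockIdx T (τ p) B)) ^ ((3:ℝ)/2) := by
      have hz : (0:ℝ) ≤ (T/(B:ℝ))⁻¹ * QVjump T σ τ j B (blockIdx T (τ p) B) := by positivity
      unfold sigBarJump
      rw [← Real.rpow_natCast (((T/(B:ℝ))⁻¹ * QVjump T σ τ j B (blockIdx T (τ p) B)) ^ ((1:ℝ)/2)) 3,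
        ← Real.rpow_mul hz,
        show ((1:ℝ)/2 * ((3:ℕ):ℝ)) = (3:ℝ)/2 by norm_num,
        ← Real.mul_rpow hz hΔ.le]
      congr 1
      field_simp
    unfold termB
    rw [he2, ← he3]
    ring
  -- ============== Step D: assembly ==============
  have hδev : ∀ᶠ B : ℕ in atTop, T/(B:ℝ) < δ :=
    (tendsto_const_div_atTop_nhds_zero_nat T).eventually_lt_const hδpos
  have hBev : ∀ᶠ B : ℕ in atTop, 1 ≤ B := eventually_ge_atTop 1
  have hsplit : ∀ᶠ B : ℕ in atTop,
      (B:ℝ)^(-(1:ℝ)/2) * avarQMLErob T a σ σm α τ j B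
      = ((B:ℝ)^(-(1:ℝ)/2) * ∑ i ∈ Finset.range B \
            Finset.image (fun p : Fin N => blockIdx T (τ p) B) Finset.univ,
            termB T a σ σm α τ j B i)
        + (∑ p : Fin N, (B:ℝ)^(-(1:ℝ)/2) * termB T a σ σm α τ j B (blockIdx T (τ p) B)) := by
    filter_upwards [hBev, hδev] with B hB hBδ
    have hJsub : Finset.image (fun p : Fin N => blockIdx T (τ p) B) Finset.univ
        ⊆ Finset.range B := by
      intro i hi
      obtain ⟨p, _, rfl⟩ := Finset.mem_image.1 hi
      exact Finset.mem_range.2 (blockIdx_spec hT (hτ p).1 (hτ p).2 hB).2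
    have hinj : ∀ p ∈ (Finset.univ : Finset (Fin N)), ∀ q ∈ (Finset.univ : Finset (Fin N)),
        blockIdx T (τ p) B = blockIdx T (τ q) B → p = q := by
      intro p _ q _ hpq
      by_contra hne
      have h1 := (blockIdx_spec hT (hτ p).1 (hτ p).2 hB).1
      have h2 := (blockIdx_spec hT (hτ q).1 (hτ q).2 hB).1
      rw [hpq] at h1
      have h3 := same_block_close h1 h2
      obtain ⟨_, _, _, hlen⟩ := hblock B hB _ (blockIdx_spec hT (hτ q).1 (hτ q).2 hB).2
      rw [hlen] at h3
      exact absurd (hδsep p q hne) (by linarith)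
    rw [avar_eq, ← Finset.sum_sdiff hJsub, Finset.sum_image hinj, mul_add]
    congr 1
    rw [Finset.mul_sum]
  have hBhalf0 : Tendsto (fun B : ℕ => ((B:ℝ))^(-(1:ℝ)/2)) atTop (nhds 0) := by
    have h2 := tendsto_rpow_neg_atTop (y := (1:ℝ)/2) (by norm_num)
    have h3 := h2.comp (tendsto_natCast_atTop_atTop (R := ℝ))
    have h4 : (fun B : ℕ => ((B:ℝ))^(-(1:ℝ)/2)) = (fun x : ℝ => x ^ (-((1:ℝ)/2))) ∘ Nat.cast := by
      funext B
      simp [Function.comp]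
      norm_num
    rw [h4]
    exact h3
  have hrem : Tendsto (fun B : ℕ => (B:ℝ)^(-(1:ℝ)/2) *
      ∑ i ∈ Finset.range B \ Finset.image (fun p : Fin N => blockIdx T (τ p) B) Finset.univ,
        termB T a σ σm α τ j B i) atTop (nhds 0) := by
    apply squeeze_zero' (g := fun B : ℕ => ((B:ℝ))^(-(1:ℝ)/2) * C₂)
    · filter_upwards [hBev] with B hB
      apply mul_nonneg (Real.rpow_nonneg (Nat.cast_nonneg B) _)
      apply Finset.sum_nonneg
      intro i hi
      exact hterm_nonneg B hB i (Finset.mem_range.1 (Finset.mem_sdiff.1 hi).1)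
    · filter_upwards [hBev, hδev] with B hB hBδ
      apply mul_le_mul_of_nonneg_left _ (Real.rpow_nonneg (Nat.cast_nonneg B) _)
      have hb : (0:ℝ) < B := by exact_mod_cast hB
      have hbound : ∀ i ∈ Finset.range B \
          Finset.image (fun p : Fin N => blockIdx T (τ p) B) Finset.univ,
          termB T a σ σm α τ j B i ≤ C₂ * (B:ℝ)⁻¹ := by
        intro i hi
        obtain ⟨hiR, hiJ⟩ := Finset.mem_sdiff.1 hi
        have hiB := Finset.mem_range.1 hiR
        apply hstepB B hB i hiB
        intro q hq
        have heq : i = blockIdx T (τ q) B :=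
          block_unique hT hB hq (blockIdx_spec hT (hτ q).1 (hτ q).2 hB).1
        exact hiJ (Finset.mem_image.2 ⟨q, Finset.mem_univ q, heq.symm⟩)
      have hcard : ((Finset.range B \
          Finset.image (fun p : Fin N => blockIdx T (τ p) B) Finset.univ).card : ℝ) ≤ B := by
        have := Finset.card_le_card (Finset.sdiff_subset (s := Finset.range B)
          (t := Finset.image (fun p : Fin N => blockIdx T (τ p) B) Finset.univ))
        rw [Finset.card_range] at this
        exact_mod_cast this
      calc (∑ i ∈ Finset.range B \
            Finset.image (fun p : Fin N => blockIdx T (τ p) B) Finset.univ,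
            termB T a σ σm α τ j B i)
          ≤ (Finset.range B \
            Finset.image (fun p : Fin N => blockIdx T (τ p) B) Finset.univ).card
              • (C₂ * (B:ℝ)⁻¹) := Finset.sum_le_card_nsmul _ _ _ hbound
      _ = ((Finset.range B \
            Finset.image (fun p : Fin N => blockIdx T (τ p) B) Finset.univ).card : ℝ)
              * (C₂ * (B:ℝ)⁻¹) := nsmul_eq_mul _ _
      _ ≤ (B:ℝ) * (C₂ * (B:ℝ)⁻¹) :=
            mul_le_mul_of_nonneg_right hcard (by positivity)
      _ = C₂ := by field_simp
    · have := hBhalf0.mul_const C₂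
      rwa [zero_mul] at this
  have hsumlim := tendsto_finset_sum (Finset.univ : Finset (Fin N)) (fun p _ => hstepC p)
  have hfull := hrem.add hsumlim
  rw [zero_add] at hfull
  have hL : (∑ p : Fin N, 3*a*T^(-(1:ℝ)/2) * (∫ s in (0:ℝ)..T, (α s)⁻¹) ^ ((1:ℝ)/2) *
        ((α (τ p)) ^ ((1:ℝ)/2) * |j p| ^ 3))
      = 3*a*T^(-(1:ℝ)/2) * (∫ s in (0:ℝ)..T, (α s)⁻¹) ^ ((1:ℝ)/2) *
        ∑ p : Fin N, (α (τ p)) ^ ((1:ℝ)/2) * |j p| ^ 3 := by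
    rw [← Finset.mul_sum]
  rw [hL] at hfull
  have hmain : Tendsto (fun B : ℕ => (B:ℝ)^(-(1:ℝ)/2) * avarQMLErob T a σ σm α τ j B) atTop
      (nhds (3*a*T^(-(1:ℝ)/2) * (∫ s in (0:ℝ)..T, (α s)⁻¹) ^ ((1:ℝ)/2) *
        ∑ p : Fin N, (α (τ p)) ^ ((1:ℝ)/2) * |j p| ^ 3)) :=
    Tendsto.congr' (EventuallyEq.symm hsplit) hfull
  refine ⟨hmain, ?_⟩
  have hLpos : 0 < 3*a*T^(-(1:ℝ)/2) * (∫ s in (0:ℝ)..T, (α s)⁻¹) ^ ((1:ℝ)/2) *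
      ∑ p : Fin N, (α (τ p)) ^ ((1:ℝ)/2) * |j p| ^ 3 := by
    have h1 : 0 < T^(-(1:ℝ)/2) := Real.rpow_pos_of_pos hT _
    have h2 : 0 < (∫ s in (0:ℝ)..T, (α s)⁻¹) ^ ((1:ℝ)/2) := Real.rpow_pos_of_pos hI0 _
    have h3 : 0 < ∑ p : Fin N, (α (τ p)) ^ ((1:ℝ)/2) * |j p| ^ 3 := by
      apply Finset.sum_pos
      · intro p _
        have hαp : 0 < α (τ p) := hαpos (τ p) ⟨(hτ p).1.le, (hτ p).2⟩
        have h4 : 0 < |j p| := abs_pos.2 (hj p)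
        have h5 : 0 < (α (τ p)) ^ ((1:ℝ)/2) := Real.rpow_pos_of_pos hαp _
        positivity
      · exact ⟨⟨0, hN⟩, Finset.mem_univ _⟩
    positivity
  have hsqrt : Tendsto (fun B : ℕ => ((B:ℝ))^((1:ℝ)/2)) atTop atTop :=
    (tendsto_rpow_atTop (by norm_num : (0:ℝ) < 1/2)).comp (tendsto_natCast_atTop_atTop (R := ℝ))
  have hprod := Tendsto.atTop_mul_pos hLpos hsqrt hmain
  apply Tendsto.congr' _ hprod
  filter_upwards [hBev] with B hB
  have hb : (0:ℝ) < B := by exact_mod_cast hB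
  have h6 : ((B:ℝ))^((1:ℝ)/2) * ((B:ℝ))^(-(1:ℝ)/2) = 1 := by
    rw [← Real.rpow_add hb]
    norm_num
  calc ((B:ℝ))^((1:ℝ)/2) * ((B:ℝ)^(-(1:ℝ)/2) * avarQMLErob T a σ σm α τ j B)
      = (((B:ℝ))^((1:ℝ)/2) * ((B:ℝ))^(-(1:ℝ)/2)) * avarQMLErob T a σ σm α τ j B := by ring
  _ = avarQMLErob T a σ σm α τ j B := by rw [h6, one_mul]
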